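/- For every integer m ≥ 0, the series Σ_{n≥0} φ²_{n,m} (2/27)^n converges and its sum equals Z²_m = ((2m)! / (m!(m+2)!)) · (9/4)^{m+1}. -/

import Mathlib

/-!
Let `B = 1 + x B³` be the generating function of ternary trees. The coefficient of `xⁿ` in
`B ^ (r + 1)` is `U r n = ternaryCoeff r n = (r + 1) (3n + r)! / (n! (2n + r + 1)!)`; these satisfy
`U (r + 1) (n + 1) = U r (n + 1) + U (r + 3) n` and `U 0 (n + 1) = U 2 n`. At the critical point
`x = 4/27`, where `B = 3/2` is a double root of `1 + x b³ = b`, the recurrence shows by induction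
that the partial sums of `T r = ∑ U r n xⁿ` are at most `(3/2) ^ (r + 1)`, so these series
converge and satisfy `T (r + 1) = T r + x T (r + 3)` and `T 0 = 1 + x T 2`. The sequence
`T r (2/3) ^ (r + 1)` is then a bounded solution of a linear recurrence with characteristic roots
`1, 1, -2`, hence constant, and the initial condition makes it `1`: `T r = (3/2) ^ (r + 1)`.
Finally, since `3 (2n + r + 2) - 2 (3n + r + 1) = r + 4`, the term `φ²_{n,m} (2/27)ⁿ` is a fixed
linear combination of `U (2m) n (4/27)ⁿ` and `U (2m + 1) n (4/27)ⁿ`.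
-/

/-- The number of rooted type II triangulations of a disc with m+2 boundary
vertices and n internal vertices. -/
noncomputable def phi2 (n m : ℕ) : ℝ :=
  (2 ^ (n + 1) * Nat.factorial (2 * m + 1) * Nat.factorial (2 * m + 3 * n) : ℝ) /
    ((Nat.factorial m) ^ 2 * Nat.factorial n * Nat.factorial (2 * m + 2 * n + 2))

open Finset Filter Topology
open scoped Nat

lemma eq_zero_of_abs_le_of_succ_eq_mul {u : ℕ → ℝ} {c M : ℝ} (hc : 1 < |c|)
    (hu : ∀ r, |u r| ≤ M) (hrec : ∀ r, u (r + 1) = c * u r) (r : ℕ) : u r = 0 := by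
  have hpow : ∀ k, u k = c ^ k * u 0 := by
    intro k
    induction k with
    | zero => simp
    | succ k ih => rw [hrec, ih, pow_succ]; ring
  have hu0 : u 0 = 0 := by
    by_contra h
    obtain ⟨k, hk⟩ := pow_unbounded_of_one_lt (M / |u 0|) hc
    have hk' := hu k
    rw [hpow, abs_mul, abs_pow, ← le_div_iff₀ (abs_pos.mpr h)] at hk'
    linarith
  rw [hpow, hu0, mul_zero]

lemma eq_zero_of_abs_add_mul_le {a d M : ℝ} (h : ∀ r : ℕ, |a + r * d| ≤ M) : d = 0 := by
  by_contra hd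
  obtain ⟨r, hr⟩ := exists_nat_gt (2 * M / |d|)
  have hrd : |(r : ℝ) * d| ≤ 2 * M := by
    calc |(r : ℝ) * d| = |(a + r * d) - (a + 0 * d)| := by ring_nf
      _ ≤ |a + r * d| + |a + (0 : ℕ) * d| := by push_cast; exact abs_sub _ _
      _ ≤ 2 * M := by linarith [h r, h 0]
  rw [abs_mul, Nat.abs_cast, ← le_div_iff₀ (abs_pos.mpr hd)] at hrd
  linarith

lemma eq_of_abs_le_of_add_three {E : ℕ → ℝ} {M : ℝ} (hE : ∀ r, |E r| ≤ M)
    (hrec : ∀ r, E (r + 3) = 3 * E (r + 1) - 2 * E r) (r : ℕ) : E r = E 0 := by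
  have hsecond : ∀ r, E (r + 2) - 2 * E (r + 1) + E r = 0 := by
    refine eq_zero_of_abs_le_of_succ_eq_mul (c := -2) (M := 4 * M) (by norm_num) (fun r => ?_)
      (fun r => by rw [hrec]; ring)
    calc |E (r + 2) - 2 * E (r + 1) + E r| ≤ |E (r + 2)| + 2 * |E (r + 1)| + |E r| := by
          have := abs_add_three (E (r + 2)) (-(2 * E (r + 1))) (E r)
          rwa [abs_neg, abs_mul, abs_two, ← sub_eq_add_neg] at this
      _ ≤ 4 * M := by linarith [hE r, hE (r + 1), hE (r + 2)]
  have hstep : ∀ r, E (r + 1) = E r + (E 1 - E 0) := by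
    intro r
    induction r with
    | zero => ring
    | succ r ih => linarith [hsecond r]
  have harith : ∀ r : ℕ, E r = E 0 + r * (E 1 - E 0) := by
    intro r
    induction r with
    | zero => simp
    | succ r ih => rw [hstep, ih]; push_cast; ring
  have hd := eq_zero_of_abs_add_mul_le (fun r => (harith r) ▸ hE r)
  rw [harith, hd, mul_zero, add_zero]

noncomputable def ternaryCoeff (r n : ℕ) : ℝ :=
  (r + 1) * (3 * n + r)! / (n ! * (2 * n + r + 1)!)

lemma ternaryCoeff_nonneg (r n : ℕ) : 0 ≤ ternaryCoeff r n := by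
  unfold ternaryCoeff
  positivity

@[simp]
lemma ternaryCoeff_zero_right (r : ℕ) : ternaryCoeff r 0 = 1 := by
  simp [ternaryCoeff, Nat.factorial_succ, Nat.factorial_ne_zero, Nat.cast_add_one_ne_zero]

lemma ternaryCoeff_zero_succ (n : ℕ) : ternaryCoeff 0 (n + 1) = ternaryCoeff 2 n := by
  simp only [ternaryCoeff, show 3 * (n + 1) + 0 = 3 * n + 2 + 1 by ring,
    show 2 * (n + 1) + 0 + 1 = 2 * n + 2 + 1 by ring, Nat.factorial_succ (3 * n + 2),
    Nat.factorial_succ n]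
  have := Nat.factorial_ne_zero n
  have := Nat.factorial_ne_zero (3 * n + 2)
  have := Nat.factorial_ne_zero (2 * n + 2 + 1)
  push_cast
  field_simp
  ring

lemma ternaryCoeff_succ_succ (r n : ℕ) :
    ternaryCoeff (r + 1) (n + 1) = ternaryCoeff r (n + 1) + ternaryCoeff (r + 3) n := by
  simp only [ternaryCoeff, show 3 * (n + 1) + (r + 1) = 3 * n + r + 3 + 1 by ring,
    show 2 * (n + 1) + (r + 1) + 1 = 2 * n + r + 3 + 1 by ring,
    show 3 * (n + 1) + r = 3 * n + r + 2 + 1 by ring, show 2 * (n + 1) + r + 1 = 2 * n + r + 3 by ring,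
    show 3 * n + (r + 3) = 3 * n + r + 2 + 1 by ring,
    show 2 * n + (r + 3) + 1 = 2 * n + r + 3 + 1 by ring,
    Nat.factorial_succ (3 * n + r + 3), Nat.factorial_succ (2 * n + r + 3), Nat.factorial_succ n]
  have := Nat.factorial_ne_zero n
  have := Nat.factorial_ne_zero (3 * n + r + 2 + 1)
  have := Nat.factorial_ne_zero (2 * n + r + 3)
  push_cast
  field_simp
  ring

section PartialSums

variable (x : ℝ)

lemma sum_range_succ_ternaryCoeff_zero (N : ℕ) :
    ∑ n ∈ range (N + 1), ternaryCoeff 0 n * x ^ n =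
      1 + x * ∑ n ∈ range N, ternaryCoeff 2 n * x ^ n := by
  rw [sum_range_succ', mul_sum]
  simp only [ternaryCoeff_zero_succ, ternaryCoeff_zero_right, pow_zero, mul_one, pow_succ]
  rw [add_comm]
  congr 1
  exact sum_congr rfl fun n _ => by ring

lemma sum_range_succ_ternaryCoeff_succ (r N : ℕ) :
    ∑ n ∈ range (N + 1), ternaryCoeff (r + 1) n * x ^ n =
      ∑ n ∈ range (N + 1), ternaryCoeff r n * x ^ n +
        x * ∑ n ∈ range N, ternaryCoeff (r + 3) n * x ^ n := by
  rw [sum_range_succ', sum_range_succ' _ N, mul_sum]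
  simp only [ternaryCoeff_succ_succ, ternaryCoeff_zero_right, pow_zero, pow_succ]
  rw [add_right_comm, ← sum_add_distrib]
  congr 1
  exact sum_congr rfl fun n _ => by ring

lemma sum_range_ternaryCoeff_le {b : ℝ} (hx : 0 ≤ x) (hb : 0 ≤ b) (hxb : 1 + x * b ^ 3 ≤ b) :
    ∀ N r, ∑ n ∈ range N, ternaryCoeff r n * x ^ n ≤ b ^ (r + 1) := by
  intro N
  induction N with
  | zero => intro r; simp only [range_zero, sum_empty]; positivity
  | succ N ihN =>
    intro r
    induction r with
    | zero =>
      rw [sum_range_succ_ternaryCoeff_zero, zero_add, pow_one]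
      calc _ ≤ 1 + x * b ^ (2 + 1) := by gcongr; exact ihN 2
        _ ≤ b := hxb
    | succ r ihr =>
      rw [sum_range_succ_ternaryCoeff_succ]
      calc _ ≤ b ^ (r + 1) + x * b ^ (r + 3 + 1) := by gcongr; exact ihN _
        _ = b ^ (r + 1) * (1 + x * b ^ 3) := by ring
        _ ≤ b ^ (r + 1) * b := by gcongr
        _ = b ^ (r + 1 + 1) := by ring

variable {x}

lemma summable_ternaryCoeff {b : ℝ} (hx : 0 ≤ x) (hb : 0 ≤ b) (hxb : 1 + x * b ^ 3 ≤ b) (r : ℕ) :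
    Summable fun n => ternaryCoeff r n * x ^ n :=
  summable_of_sum_range_le (fun n => mul_nonneg (ternaryCoeff_nonneg r n) (pow_nonneg hx n))
    (fun N => sum_range_ternaryCoeff_le x hx hb hxb N r)

lemma tsum_ternaryCoeff_le {b : ℝ} (hx : 0 ≤ x) (hb : 0 ≤ b) (hxb : 1 + x * b ^ 3 ≤ b) (r : ℕ) :
    ∑' n, ternaryCoeff r n * x ^ n ≤ b ^ (r + 1) :=
  (summable_ternaryCoeff hx hb hxb r).tsum_le_of_sum_range_le
    (fun N => sum_range_ternaryCoeff_le x hx hb hxb N r)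

lemma tsum_ternaryCoeff_zero (hs : ∀ r, Summable fun n => ternaryCoeff r n * x ^ n) :
    ∑' n, ternaryCoeff 0 n * x ^ n = 1 + x * ∑' n, ternaryCoeff 2 n * x ^ n := by
  refine tendsto_nhds_unique (((hs 0).hasSum.tendsto_sum_nat).comp (tendsto_add_atTop_nat 1)) ?_
  simpa [Function.comp_def, sum_range_succ_ternaryCoeff_zero] using
    (((hs 2).hasSum.tendsto_sum_nat).const_mul x).const_add 1

lemma tsum_ternaryCoeff_succ (hs : ∀ r, Summable fun n => ternaryCoeff r n * x ^ n) (r : ℕ) :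
    ∑' n, ternaryCoeff (r + 1) n * x ^ n =
      ∑' n, ternaryCoeff r n * x ^ n + x * ∑' n, ternaryCoeff (r + 3) n * x ^ n := by
  refine tendsto_nhds_unique
    (((hs (r + 1)).hasSum.tendsto_sum_nat).comp (tendsto_add_atTop_nat 1)) ?_
  simpa [Function.comp_def, sum_range_succ_ternaryCoeff_succ] using
    (((hs r).hasSum.tendsto_sum_nat).comp (tendsto_add_atTop_nat 1)).add
      (((hs (r + 3)).hasSum.tendsto_sum_nat).const_mul x)

end PartialSums

theorem hasSum_ternaryCoeff (r : ℕ) :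
    HasSum (fun n => ternaryCoeff r n * (4 / 27 : ℝ) ^ n) ((3 / 2) ^ (r + 1)) := by
  have hx : (0 : ℝ) ≤ 4 / 27 := by norm_num
  have hb : (0 : ℝ) ≤ 3 / 2 := by norm_num
  have hxb : 1 + 4 / 27 * (3 / 2 : ℝ) ^ 3 ≤ 3 / 2 := by norm_num
  have hs := summable_ternaryCoeff hx hb hxb
  set T : ℕ → ℝ := fun r => ∑' n, ternaryCoeff r n * (4 / 27 : ℝ) ^ n
  have hT_zero : T 0 = 1 + 4 / 27 * T 2 := tsum_ternaryCoeff_zero hs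
  have hT_succ : ∀ r, T (r + 1) = T r + 4 / 27 * T (r + 3) := tsum_ternaryCoeff_succ hs
  set D : ℕ → ℝ := fun r => T r * (2 / 3) ^ (r + 1) with hD
  have hD_abs : ∀ r, |D r| ≤ 1 := by
    intro r
    have hT0 : 0 ≤ T r := tsum_nonneg fun n => mul_nonneg (ternaryCoeff_nonneg r n) (by positivity)
    have hT1 : T r * (2 / 3) ^ (r + 1) ≤ (3 / 2) ^ (r + 1) * (2 / 3) ^ (r + 1) := by
      gcongr; exact tsum_ternaryCoeff_le hx hb hxb r
    rw [← mul_pow] at hT1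
    norm_num at hT1
    rw [abs_le]
    exact ⟨by linarith [mul_nonneg hT0 (pow_nonneg (by norm_num : (0 : ℝ) ≤ 2 / 3) (r + 1))], hT1⟩
  have hD_rec : ∀ r, D (r + 3) = 3 * D (r + 1) - 2 * D r := by
    intro r
    simp only [hD]
    linear_combination (-3 * (2 / 3 : ℝ) ^ (r + 2)) * hT_succ r
  have hD_const := eq_of_abs_le_of_add_three hD_abs hD_rec
  have hD_zero : D 0 = 1 := by
    have h2 := hD_const 2
    simp only [hD] at h2 ⊢
    linear_combination hT_zero + h2 / 2
  have hTr : T r = (3 / 2) ^ (r + 1) := by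
    have hDr : T r * (2 / 3) ^ (r + 1) = 1 := (hD_const r).trans hD_zero
    calc T r = T r * ((2 / 3) ^ (r + 1) * (3 / 2) ^ (r + 1)) := by rw [← mul_pow]; norm_num
      _ = (3 / 2) ^ (r + 1) := by rw [← mul_assoc, hDr, one_mul]
  exact hTr ▸ (hs r).hasSum

lemma factorial_ratio_eq_ternaryCoeff (r n : ℕ) :
    ((3 * n + r)! / (n ! * (2 * n + r + 2)!) : ℝ) =
      (3 * ternaryCoeff r n / (r + 1) - 2 * ternaryCoeff (r + 1) n / (r + 2)) / (r + 4) := by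
  simp only [ternaryCoeff, show 3 * n + (r + 1) = 3 * n + r + 1 by ring,
    show 2 * n + (r + 1) + 1 = 2 * n + r + 1 + 1 by ring,
    show 2 * n + r + 2 = 2 * n + r + 1 + 1 by ring,
    Nat.factorial_succ (3 * n + r), Nat.factorial_succ (2 * n + r + 1)]
  have := Nat.factorial_ne_zero n
  have := Nat.factorial_ne_zero (3 * n + r)
  have := Nat.factorial_ne_zero (2 * n + r + 1)
  push_cast
  field_simp
  ring

theorem hasSum_factorial_ratio (r : ℕ) :
    HasSum (fun n : ℕ => ((3 * n + r)! / (n ! * (2 * n + r + 2)!) : ℝ) * (4 / 27) ^ n)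
      (3 * (3 / 2) ^ (r + 1) / ((r + 1) * (r + 2) * (r + 4))) := by
  have h := (((hasSum_ternaryCoeff r).mul_left (3 / (r + 1) : ℝ)).sub
    ((hasSum_ternaryCoeff (r + 1)).mul_left (2 / (r + 2) : ℝ))).div_const (r + 4 : ℝ)
  have hterm : ∀ n : ℕ, ((3 * n + r)! / (n ! * (2 * n + r + 2)!) : ℝ) * (4 / 27) ^ n =
      (3 / (r + 1) * (ternaryCoeff r n * (4 / 27) ^ n) -
        2 / (r + 2) * (ternaryCoeff (r + 1) n * (4 / 27) ^ n)) / (r + 4) := by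
    intro n
    rw [factorial_ratio_eq_ternaryCoeff]
    ring
  have hval : (3 * (3 / 2) ^ (r + 1) / ((r + 1) * (r + 2) * (r + 4)) : ℝ) =
      (3 / (r + 1) * (3 / 2) ^ (r + 1) - 2 / (r + 2) * (3 / 2) ^ (r + 1 + 1)) / (r + 4) := by
    field_simp
    ring
  rw [funext hterm, hval]
  exact h

theorem Z2_critical (m : ℕ) :
    HasSum (fun n : ℕ => phi2 n m * (2 / 27 : ℝ) ^ n)
      ((Nat.factorial (2 * m) : ℝ) / (Nat.factorial m * Nat.factorial (m + 2)) *
        (9 / 4) ^ (m + 1)) := by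
  have h := (hasSum_factorial_ratio (2 * m)).mul_left (2 * (2 * m + 1)! / (m ! ^ 2 : ℝ))
  have hterm : ∀ n, phi2 n m * (2 / 27 : ℝ) ^ n = 2 * (2 * m + 1)! / (m ! ^ 2 : ℝ) *
      (((3 * n + 2 * m)! / (n ! * (2 * n + 2 * m + 2)!) : ℝ) * (4 / 27) ^ n) := by
    intro n
    rw [phi2, add_comm (2 * m) (3 * n), show 2 * m + 2 * n = 2 * n + 2 * m by ring, pow_succ,
      show (4 / 27 : ℝ) ^ n = 2 ^ n * (2 / 27) ^ n by rw [← mul_pow]; norm_num]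
    ring
  have hval : ((2 * m)! / (m ! * (m + 2)!) * (9 / 4) ^ (m + 1) : ℝ) = 2 * (2 * m + 1)! / m ! ^ 2 *
      (3 * (3 / 2) ^ (2 * m + 1) / ((↑(2 * m) + 1) * (↑(2 * m) + 2) * (↑(2 * m) + 4))) := by
    rw [Nat.factorial_succ (m + 1), Nat.factorial_succ m, Nat.factorial_succ (2 * m),
      show (3 / 2 : ℝ) ^ (2 * m + 1) = (9 / 4) ^ m * (3 / 2) by rw [pow_succ, pow_mul]; norm_num]
    have := Nat.factorial_ne_zero m
    push_cast
    field_simp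
    ring
  rw [funext hterm, hval]
  exact h
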